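/- arXiv:2301.11567 — 2 statements merged into one kernel-verified Lean document; each statement's English description precedes it below -/
import Mathlib

section
/- Suppose γ(b,I,x) is strictly increasing in its first argument b, and let b1, b2 : ℝ → [0,∞) be continuous with b1(x) < b2(x) for all x ∈ [L1,L2]. For i = 1, 2 set a_i(x) := (σ/μ1)·β(m(x),0,x) − μ2 − γ(b_i(x),0,x), and assume each a_i is Lipschitz continuous and attains its maximum over [L1,L2] at an interior point. Then λ_p((L1,L2), d, a_2) < λ_p((L1,L2), d, a_1); that is, the generalized principal eigenvalue is strictly decreasing in the hospital-bed function b. -/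
/-! If `b1 < b2` on `[L1, L2]` then, by strict monotonicity of `γ` in `b` and compactness,
`a2 + ε ≤ a1` on `[L1, L2]` for some `ε > 0`. Every test function `φ` certifying a level `λ`
for `a1` then certifies `λ - ε` for `a2`, so `λ_p(a2) + ε ≤ λ_p(a1)`. The infima are finite:
the constant `1` certifies `sup a1` because `∫ J ≤ 1`, and evaluating at any `c ∈ (L1, L2)`
bounds every level for `a2` below by `a2 c - d`. -/

open MeasureTheory Set Filter Topology

noncomputable section

def KernelJ (J : ℝ → ℝ) : Prop :=
  Continuous J ∧ (∀ x, 0 ≤ J x) ∧ (∃ C, ∀ x, J x ≤ C) ∧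
    (∀ x, J (-x) = J x) ∧ 0 < J 0 ∧ (∫ x : ℝ, J x) = 1

/-- The generalized principal eigenvalue of the nonlocal operator
`d∫_{L1}^{L2} J(x-y)φ(y)dy - dφ(x) + a(x)φ(x)` on `(L1, L2)`. -/
def lambdaP (J : ℝ → ℝ) (L1 L2 d : ℝ) (a : ℝ → ℝ) : ℝ :=
  sInf {lam : ℝ | ∃ φ : ℝ → ℝ, ContinuousOn φ (Icc L1 L2) ∧
    (∀ x ∈ Icc L1 L2, 0 < φ x) ∧
    ∀ x ∈ Ioo L1 L2,
      d * (∫ y in L1..L2, J (x - y) * φ y) - d * φ x + a x * φ x ≤ lam * φ x}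

def supersolutionLevels (J : ℝ → ℝ) (L1 L2 d : ℝ) (a : ℝ → ℝ) : Set ℝ :=
  {lam : ℝ | ∃ φ : ℝ → ℝ, ContinuousOn φ (Icc L1 L2) ∧
    (∀ x ∈ Icc L1 L2, 0 < φ x) ∧
    ∀ x ∈ Ioo L1 L2,
      d * (∫ y in L1..L2, J (x - y) * φ y) - d * φ x + a x * φ x ≤ lam * φ x}

theorem lambdaP_eq_sInf_supersolutionLevels (J : ℝ → ℝ) (L1 L2 d : ℝ) (a : ℝ → ℝ) :
    lambdaP J L1 L2 d a = sInf (supersolutionLevels J L1 L2 d a) :=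
  rfl

theorem intervalIntegral_comp_sub_left_le_one {J : ℝ → ℝ} (hJ0 : ∀ x, 0 ≤ J x)
    (hJ1 : ∫ x, J x = 1) (x : ℝ) {s t : ℝ} (hst : s ≤ t) :
    ∫ y in s..t, J (x - y) ≤ 1 := by
  have hJ : Integrable J := .of_integral_ne_zero (by rw [hJ1]; exact one_ne_zero)
  rw [intervalIntegral.integral_of_le hst]
  calc ∫ y in Ioc s t, J (x - y)
      ≤ ∫ y, J (x - y) :=
        setIntegral_le_integral (by simpa using hJ.comp_sub_left x)
          (.of_forall fun y => hJ0 _)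
    _ = 1 := by rw [integral_sub_left_eq_self J volume x, hJ1]

section supersolutionLevels

variable {J : ℝ → ℝ} {L1 L2 d : ℝ} {a a' : ℝ → ℝ}

theorem supersolutionLevels_nonempty (hJ0 : ∀ x, 0 ≤ J x) (hJ1 : ∫ x, J x = 1) (hd : 0 ≤ d)
    (ha : BddAbove (a '' Ioo L1 L2)) : (supersolutionLevels J L1 L2 d a).Nonempty := by
  obtain ⟨M, hM⟩ := ha
  refine ⟨M, fun _ => 1, continuousOn_const, fun _ _ => one_pos, fun x hx => ?_⟩
  have hJx := intervalIntegral_comp_sub_left_le_one hJ0 hJ1 x (hx.1.trans hx.2).le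
  have hax : a x ≤ M := hM (mem_image_of_mem a hx)
  simp only [mul_one]
  nlinarith

theorem bddBelow_supersolutionLevels (hJ0 : ∀ x, 0 ≤ J x) (hd : 0 ≤ d) (hL : L1 < L2) :
    BddBelow (supersolutionLevels J L1 L2 d a) := by
  obtain ⟨c, hc⟩ := nonempty_Ioo.2 hL
  refine ⟨a c - d, ?_⟩
  rintro lam ⟨φ, -, hφpos, hφ⟩
  have hφc := hφpos c (Ioo_subset_Icc_self hc)
  have hint : 0 ≤ ∫ y in L1..L2, J (c - y) * φ y :=
    intervalIntegral.integral_nonneg hL.le fun y hy => mul_nonneg (hJ0 _) (hφpos y hy).le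
  have := hφ c hc
  nlinarith

theorem sub_mem_supersolutionLevels {lam ε : ℝ} (h : ∀ x ∈ Ioo L1 L2, a' x + ε ≤ a x)
    (hlam : lam ∈ supersolutionLevels J L1 L2 d a) :
    lam - ε ∈ supersolutionLevels J L1 L2 d a' := by
  obtain ⟨φ, hφc, hφpos, hφ⟩ := hlam
  refine ⟨φ, hφc, hφpos, fun x hx => ?_⟩
  have hφx := hφpos x (Ioo_subset_Icc_self hx)
  have := hφ x hx
  nlinarith [h x hx]

theorem lambdaP_add_le_of_add_le {ε : ℝ} (hJ0 : ∀ x, 0 ≤ J x) (hd : 0 ≤ d) (hL : L1 < L2)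
    (hne : (supersolutionLevels J L1 L2 d a).Nonempty) (h : ∀ x ∈ Ioo L1 L2, a' x + ε ≤ a x) :
    lambdaP J L1 L2 d a' + ε ≤ lambdaP J L1 L2 d a := by
  refine le_csInf hne fun lam hlam => ?_
  have := csInf_le (bddBelow_supersolutionLevels hJ0 hd hL) (sub_mem_supersolutionLevels h hlam)
  rw [lambdaP_eq_sInf_supersolutionLevels]
  linarith

end supersolutionLevels

theorem lambdaP_strictAnti_beds_general
    (J : ℝ → ℝ) (d σ μ1 μ2 L1 L2 : ℝ) (m b1 b2 : ℝ → ℝ)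
    (β γ : ℝ → ℝ → ℝ → ℝ) (a1 a2 : ℝ → ℝ)
    (hJ : KernelJ J) (hd : 0 < d)
    (hL : L1 < L2)
    (hγstrict : ∀ I' x, StrictMonoOn (fun b' => γ b' I' x) (Ici 0))
    (hb1nn : ∀ x, 0 ≤ b1 x)
    (hb2nn : ∀ x, 0 ≤ b2 x)
    (hb12 : ∀ x ∈ Icc L1 L2, b1 x < b2 x)
    (ha1 : ∀ x, a1 x = σ / μ1 * β (m x) 0 x - μ2 - γ (b1 x) 0 x)
    (ha2 : ∀ x, a2 x = σ / μ1 * β (m x) 0 x - μ2 - γ (b2 x) 0 x)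
    (ha1L : ∃ K, LipschitzWith K a1) (ha2L : ∃ K, LipschitzWith K a2) :
    lambdaP J L1 L2 d a2 < lambdaP J L1 L2 d a1 := by
  obtain ⟨-, hJ0, -, -, -, hJ1⟩ := hJ
  obtain ⟨K1, hK1⟩ := ha1L
  obtain ⟨K2, hK2⟩ := ha2L
  have hgap : ∀ x ∈ Icc L1 L2, 0 < a1 x - a2 x := fun x hx => by
    have := hγstrict 0 x (hb1nn x) (hb2nn x) (hb12 x hx)
    simp only [ha1, ha2] at this ⊢
    linarith
  obtain ⟨ε, hε, hεle⟩ :=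
    isCompact_Icc.exists_forall_le' (hK1.continuous.sub hK2.continuous).continuousOn hgap
  have hne : (supersolutionLevels J L1 L2 d a1).Nonempty :=
    supersolutionLevels_nonempty hJ0 hJ1 hd.le
      ((isCompact_Icc.bddAbove_image hK1.continuous.continuousOn).mono
        (image_mono Ioo_subset_Icc_self))
  have := lambdaP_add_le_of_add_le hJ0 hd.le hL hne fun x hx => by
    have := hεle x (Ioo_subset_Icc_self hx)
    simp only [Pi.sub_apply] at this
    linarith
  linarith

/-- Theorem 3.2 (ii): the generalized principal eigenvalue is strictly decreasing
in the hospital-bed function `b`. -/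
theorem lambdaP_strictAnti_beds
    (J : ℝ → ℝ) (d σ μ1 μ2 L1 L2 : ℝ) (m b1 b2 : ℝ → ℝ)
    (β γ : ℝ → ℝ → ℝ → ℝ) (a1 a2 : ℝ → ℝ)
    (hJ : KernelJ J) (hd : 0 < d) (hσ : 0 < σ) (hμ1 : 0 < μ1) (hμ2 : 0 < μ2)
    (hL : L1 < L2)
    (hm : Continuous m) (hm0 : ∀ x, 0 ≤ m x)
    (hβL : ∃ K, LipschitzWith K fun p : ℝ × ℝ × ℝ => β p.1 p.2.1 p.2.2)
    (hγL : ∃ K, LipschitzWith K fun p : ℝ × ℝ × ℝ => γ p.1 p.2.1 p.2.2)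
    (hβ0 : ∀ m' I' x, 0 ≤ β m' I' x) (hγ0 : ∀ b' I' x, 0 ≤ γ b' I' x)
    (hγstrict : ∀ I' x, StrictMonoOn (fun b' => γ b' I' x) (Ici 0))
    (hb1 : Continuous b1) (hb1nn : ∀ x, 0 ≤ b1 x)
    (hb2 : Continuous b2) (hb2nn : ∀ x, 0 ≤ b2 x)
    (hb12 : ∀ x ∈ Icc L1 L2, b1 x < b2 x)
    (ha1 : ∀ x, a1 x = σ / μ1 * β (m x) 0 x - μ2 - γ (b1 x) 0 x)
    (ha2 : ∀ x, a2 x = σ / μ1 * β (m x) 0 x - μ2 - γ (b2 x) 0 x)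
    (ha1L : ∃ K, LipschitzWith K a1) (ha2L : ∃ K, LipschitzWith K a2)
    (ha1H : ∃ x0 ∈ Ioo L1 L2, ∀ x ∈ Icc L1 L2, a1 x ≤ a1 x0)
    (ha2H : ∃ x0 ∈ Ioo L1 L2, ∀ x ∈ Icc L1 L2, a2 x ≤ a2 x0) :
    lambdaP J L1 L2 d a2 < lambdaP J L1 L2 d a1 :=
  lambdaP_strictAnti_beds_general J d σ μ1 μ2 L1 L2 m b1 b2 β γ a1 a2 hJ hd hL hγstrict hb1nn hb2nn
    hb12 ha1 ha2 ha1L ha2L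
end
end

section
/- Let a : ℝ → ℝ be Lipschitz continuous and suppose that for every pair L1 < L2 the restriction of a to [L1,L2] attains its maximum at an interior point of (L1,L2). Then for each fixed d > 0, the map (L1,L2) ↦ λ_p((L1,L2), d, a) is continuous on the set {(L1,L2) ∈ ℝ² : L1 < L2}. -/
open MeasureTheory Set Filter Topology

noncomputable section

/-!
Pulling a test function `φ` for `(M1, M2)` back along the increasing affine map of `(N1, N2)` onto
`(M1, M2)` gives a test function for `(N1, N2)`. The kernel `J (x - y)` turns into
`J (t * (x' - y'))`, with `t` the ratio of the two lengths, and the eigenvalue grows by at most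
`|t - 1|` times a bound for `λ + d - a`, plus the Lipschitz constant of `a` times the displacement
of the endpoints, plus the oscillation of `J` under the dilation by `t` times `∫ φ / φ`. A Harnack
inequality `c * ∫ φ ≤ φ`, with `c` uniform over intervals near a fixed `L`, bounds the last term,
so `λ_p(N) ≤ λ_p(M) + ε` for all intervals `M`, `N` close enough to `L`.

The Harnack inequality comes from `J ≥ η > 0` on `[-4r, 4r]`: the eigenvalue inequality bounds
`φ x` below by a multiple of the mass of `φ` within `4r` of `x`, and chaining this bound along
steps of length `2r` compares the masses of `φ` in any two windows of radius `r`.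
-/

open Metric

section TestFunction

variable {J a φ : ℝ → ℝ} {d lam L1 L2 : ℝ}

def IsTestFunction (J : ℝ → ℝ) (L1 L2 d : ℝ) (a : ℝ → ℝ) (lam : ℝ) (φ : ℝ → ℝ) : Prop :=
  ContinuousOn φ (Icc L1 L2) ∧ (∀ x ∈ Icc L1 L2, 0 < φ x) ∧
    ∀ x ∈ Ioo L1 L2, d * (∫ y in L1..L2, J (x - y) * φ y) - d * φ x + a x * φ x ≤ lam * φ x

theorem lambdaP_eq_sInf (J : ℝ → ℝ) (L1 L2 d : ℝ) (a : ℝ → ℝ) :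
    lambdaP J L1 L2 d a = sInf {lam | ∃ φ, IsTestFunction J L1 L2 d a lam φ} := rfl

theorem KernelJ.integrable (hJ : KernelJ J) : Integrable J := by
  by_contra h
  simpa [integral_undef h] using hJ.2.2.2.2.2

theorem KernelJ.intervalIntegral_le_one (hJ : KernelJ J) (h : L1 ≤ L2) (x : ℝ) :
    ∫ y in L1..L2, J (x - y) ≤ 1 := by
  rw [intervalIntegral.integral_comp_sub_left J x,
    intervalIntegral.integral_of_le (by linarith), ← hJ.2.2.2.2.2]
  exact setIntegral_le_integral hJ.integrable (ae_of_all _ hJ.2.1)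

theorem intervalIntegral_kernel_mul_nonneg (hJ : ∀ u, 0 ≤ J u) (h : L1 ≤ L2)
    (hφ : ∀ y ∈ Icc L1 L2, 0 ≤ φ y) (x : ℝ) :
    0 ≤ ∫ y in L1..L2, J (x - y) * φ y :=
  intervalIntegral.integral_nonneg h fun y hy => mul_nonneg (hJ _) (hφ y hy)

theorem continuous_intervalIntegral_kernel_mul (hJ : Continuous J)
    (hφ : ContinuousOn φ (Icc L1 L2)) (h : L1 ≤ L2) :
    Continuous fun x => ∫ y in L1..L2, J (x - y) * φ y := by
  have hφ' : Continuous fun y => φ (projIcc L1 L2 h y) :=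
    hφ.comp_continuous (continuous_subtype_val.comp continuous_projIcc) fun y =>
      (projIcc L1 L2 h y).2
  have heq : (fun x => ∫ y in L1..L2, J (x - y) * φ y) =
      fun x => ∫ y in L1..L2, J (x - y) * φ (projIcc L1 L2 h y) := by
    funext x
    refine intervalIntegral.integral_congr fun y hy => ?_
    rw [uIcc_of_le h] at hy
    simp only [projIcc_of_mem h hy]
  rw [heq]
  exact intervalIntegral.continuous_parametric_intervalIntegral_of_continuous'
    ((hJ.comp (continuous_fst.sub continuous_snd)).mul (hφ'.comp continuous_snd)) L1 L2

theorem IsTestFunction.integral_le (hφ : IsTestFunction J L1 L2 d a lam φ) {x : ℝ}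
    (hx : x ∈ Ioo L1 L2) :
    d * ∫ y in L1..L2, J (x - y) * φ y ≤ (lam + d - a x) * φ x := by
  linarith [hφ.2.2 x hx]

theorem IsTestFunction.coeff_nonneg (hJ : ∀ u, 0 ≤ J u) (hd : 0 ≤ d)
    (hφ : IsTestFunction J L1 L2 d a lam φ) {x : ℝ} (hx : x ∈ Ioo L1 L2) :
    0 ≤ lam + d - a x := by
  have hI := intervalIntegral_kernel_mul_nonneg hJ (hx.1.trans hx.2).le
    (fun y hy => (hφ.2.1 y hy).le) x
  refine le_of_mul_le_mul_right ?_ (hφ.2.1 x (Ioo_subset_Icc_self hx))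
  linarith [hφ.integral_le hx, mul_nonneg hd hI]

theorem IsTestFunction.integral_le_of_mem_Icc (hJ : Continuous J) (ha : Continuous a)
    (hφ : IsTestFunction J L1 L2 d a lam φ) (h : L1 < L2) {x : ℝ} (hx : x ∈ Icc L1 L2) :
    d * ∫ y in L1..L2, J (x - y) * φ y ≤ (lam + d - a x) * φ x := by
  rw [← closure_Ioo h.ne] at hx
  refine le_on_closure (fun x hx => hφ.integral_le hx) ?_ ?_ hx
  · exact (continuous_const.mul (continuous_intervalIntegral_kernel_mul hJ hφ.1 h.le)).continuousOn
  · rw [closure_Ioo h.ne]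
    exact ((continuous_const.sub ha).continuousOn).mul hφ.1

theorem isTestFunction_const (hJ : KernelJ J) (hd : 0 ≤ d) {m : ℝ}
    (hm : ∀ x ∈ Icc L1 L2, a x ≤ m) : IsTestFunction J L1 L2 d a m fun _ => 1 := by
  refine ⟨continuousOn_const, fun _ _ => one_pos, fun x hx => ?_⟩
  have := mul_le_mul_of_nonneg_left (hJ.intervalIntegral_le_one (hx.1.trans hx.2).le x) hd
  simp only [mul_one]
  linarith [hm x (Ioo_subset_Icc_self hx)]

theorem bddBelow_setOf_isTestFunction (hJ : ∀ u, 0 ≤ J u) (hd : 0 ≤ d) (h : L1 < L2) :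
    BddBelow {lam | ∃ φ, IsTestFunction J L1 L2 d a lam φ} := by
  have hx : (L1 + L2) / 2 ∈ Ioo L1 L2 := ⟨by linarith, by linarith⟩
  exact ⟨a ((L1 + L2) / 2) - d, fun lam ⟨φ, hφ⟩ => by linarith [hφ.coeff_nonneg hJ hd hx]⟩

theorem lambdaP_le (hJ : ∀ u, 0 ≤ J u) (hd : 0 ≤ d) (h : L1 < L2)
    (hφ : IsTestFunction J L1 L2 d a lam φ) : lambdaP J L1 L2 d a ≤ lam :=
  (lambdaP_eq_sInf J L1 L2 d a).trans_le
    (csInf_le (bddBelow_setOf_isTestFunction hJ hd h) ⟨φ, hφ⟩)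

theorem lambdaP_le_of_forall_le (hJ : KernelJ J) (hd : 0 ≤ d) (h : L1 < L2) {m : ℝ}
    (hm : ∀ x ∈ Icc L1 L2, a x ≤ m) : lambdaP J L1 L2 d a ≤ m :=
  lambdaP_le hJ.2.1 hd h (isTestFunction_const hJ hd hm)

theorem exists_isTestFunction_lt (hJ : KernelJ J) (hd : 0 ≤ d) (ha : Continuous a)
    {ε : ℝ} (hε : 0 < ε) :
    ∃ lam φ, IsTestFunction J L1 L2 d a lam φ ∧ lam < lambdaP J L1 L2 d a + ε := by
  obtain ⟨m, hm⟩ := (isCompact_Icc (a := L1) (b := L2)).bddAbove_image ha.continuousOn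
  have hne : {lam | ∃ φ, IsTestFunction J L1 L2 d a lam φ}.Nonempty :=
    ⟨m, _, isTestFunction_const hJ hd fun x hx => hm ⟨x, hx, rfl⟩⟩
  obtain ⟨lam, ⟨φ, hφ⟩, hlt⟩ :=
    exists_lt_of_csInf_lt hne
      ((lambdaP_eq_sInf J L1 L2 d a).symm.trans_lt (lt_add_of_pos_right _ hε))
  exact ⟨lam, φ, hφ, hlt⟩

end TestFunction

section Harnack

variable {J a φ : ℝ → ℝ} {d lam M1 M2 r κ ℓ : ℝ}

theorem integrableOn_inter_closedBall (hφ : ContinuousOn φ (Icc M1 M2)) (u ρ : ℝ) :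
    IntegrableOn φ (Icc M1 M2 ∩ closedBall u ρ) :=
  hφ.integrableOn_Icc.mono_set inter_subset_left

theorem setIntegral_inter_closedBall_mono (hφ : ContinuousOn φ (Icc M1 M2))
    (hφ0 : ∀ y ∈ Icc M1 M2, 0 ≤ φ y) {u v ρ σ : ℝ} (h : ρ + dist u v ≤ σ) :
    ∫ y in Icc M1 M2 ∩ closedBall u ρ, φ y ≤ ∫ y in Icc M1 M2 ∩ closedBall v σ, φ y :=
  setIntegral_mono_set (integrableOn_inter_closedBall hφ v σ)
    (ae_restrict_of_forall_mem (measurableSet_Icc.inter measurableSet_closedBall)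
      fun y hy => hφ0 y hy.1)
    (inter_subset_inter_right _ (closedBall_subset_closedBall' h)).eventuallyLE

theorem mul_le_setIntegral_inter_closedBall (hφ : ContinuousOn φ (Icc M1 M2)) (hℓ : 0 ≤ ℓ)
    (hℓr : ℓ ≤ r) (hℓM : 2 * ℓ ≤ M2 - M1) {u m : ℝ} (hu : u ∈ Icc M1 M2) (hm0 : 0 ≤ m)
    (hm : ∀ y ∈ Icc M1 M2 ∩ closedBall u r, m ≤ φ y) :
    ℓ * m ≤ ∫ y in Icc M1 M2 ∩ closedBall u r, φ y := by
  obtain ⟨t, hsub⟩ : ∃ t, Icc t (t + ℓ) ⊆ Icc M1 M2 ∩ closedBall u r := by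
    have hball : ∀ t y, u ∈ Icc t (t + ℓ) → y ∈ Icc t (t + ℓ) → y ∈ closedBall u r :=
      fun t y hu hy => by
        rw [mem_closedBall, Real.dist_eq, abs_le]
        constructor <;> linarith [hu.1, hu.2, hy.1, hy.2]
    rcases le_total u ((M1 + M2) / 2) with h | h
    · exact ⟨u, fun y hy => ⟨⟨by linarith [hu.1, hy.1], by linarith [hy.2]⟩,
        hball u y ⟨le_rfl, by linarith⟩ hy⟩⟩
    · exact ⟨u - ℓ, fun y hy => ⟨⟨by linarith [hy.1], by linarith [hu.2, hy.2]⟩,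
        hball (u - ℓ) y ⟨by linarith, by linarith⟩ hy⟩⟩
  have hint := integrableOn_inter_closedBall hφ u r
  calc ℓ * m = ∫ _ in Icc t (t + ℓ), m := by
        rw [setIntegral_const, Real.volume_real_Icc_of_le (by linarith), smul_eq_mul]; ring
    _ ≤ ∫ y in Icc t (t + ℓ), φ y :=
        setIntegral_mono_on (integrableOn_const measure_Icc_lt_top.ne) (hint.mono_set hsub)
          measurableSet_Icc fun y hy => hm y (hsub hy)
    _ ≤ ∫ y in Icc M1 M2 ∩ closedBall u r, φ y :=
        setIntegral_mono_set hint
          (ae_restrict_of_forall_mem (measurableSet_Icc.inter measurableSet_closedBall)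
            fun y hy => hm0.trans (hm y hy))
          hsub.eventuallyLE

theorem mul_setIntegral_inter_closedBall_le_intervalIntegral (hJ : Continuous J)
    (hJ0 : ∀ u, 0 ≤ J u) {η ρ : ℝ} (hη : ∀ u, |u| ≤ ρ → η ≤ J u)
    (hφ : ContinuousOn φ (Icc M1 M2)) (hφ0 : ∀ y ∈ Icc M1 M2, 0 ≤ φ y) (h : M1 ≤ M2) (x : ℝ) :
    η * ∫ y in Icc M1 M2 ∩ closedBall x ρ, φ y ≤ ∫ y in M1..M2, J (x - y) * φ y := by
  have hJφ : IntegrableOn (fun y => J (x - y) * φ y) (Icc M1 M2) :=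
    ((hJ.comp (continuous_const.sub continuous_id)).continuousOn.mul hφ).integrableOn_Icc
  have hW : MeasurableSet (Icc M1 M2 ∩ closedBall x ρ) :=
    measurableSet_Icc.inter measurableSet_closedBall
  rw [intervalIntegral.integral_of_le h, ← integral_Icc_eq_integral_Ioc, ← integral_const_mul]
  calc ∫ y in Icc M1 M2 ∩ closedBall x ρ, η * φ y
      ≤ ∫ y in Icc M1 M2 ∩ closedBall x ρ, J (x - y) * φ y :=
        setIntegral_mono_on ((integrableOn_inter_closedBall hφ x ρ).const_mul η)
          (hJφ.mono_set inter_subset_left) hW fun y hy =>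
            mul_le_mul_of_nonneg_right (hη _ (by simpa [Real.dist_eq, abs_sub_comm] using hy.2))
              (hφ0 y hy.1)
    _ ≤ ∫ y in Icc M1 M2, J (x - y) * φ y :=
        setIntegral_mono_set hJφ
          (ae_restrict_of_forall_mem measurableSet_Icc fun y hy => mul_nonneg (hJ0 _) (hφ0 y hy))
          inter_subset_left.eventuallyLE

theorem mul_setIntegral_inter_closedBall_le_of_dist_le (hφ : ContinuousOn φ (Icc M1 M2))
    (hφ0 : ∀ y ∈ Icc M1 M2, 0 ≤ φ y)
    (hloc : ∀ x ∈ Icc M1 M2, κ * ∫ y in Icc M1 M2 ∩ closedBall x (4 * r), φ y ≤ φ x)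
    (hκ : 0 ≤ κ) (hℓ : 0 ≤ ℓ) (hℓr : ℓ ≤ r) (hℓM : 2 * ℓ ≤ M2 - M1) {u v : ℝ}
    (hu : u ∈ Icc M1 M2) (huv : dist u v ≤ 2 * r) :
    κ * ℓ * ∫ y in Icc M1 M2 ∩ closedBall v r, φ y ≤ ∫ y in Icc M1 M2 ∩ closedBall u r, φ y := by
  have hGv : 0 ≤ ∫ y in Icc M1 M2 ∩ closedBall v r, φ y :=
    setIntegral_nonneg (measurableSet_Icc.inter measurableSet_closedBall) fun y hy => hφ0 y hy.1
  rw [mul_assoc, mul_left_comm]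
  refine mul_le_setIntegral_inter_closedBall hφ hℓ hℓr hℓM hu (mul_nonneg hκ hGv) fun y hy => ?_
  have hyv : r + dist v y ≤ 4 * r := by
    linarith [dist_triangle v u y, dist_comm u v, dist_comm y u, mem_closedBall.1 hy.2]
  exact (mul_le_mul_of_nonneg_left
    (setIntegral_inter_closedBall_mono hφ hφ0 hyv) hκ).trans (hloc y hy.1)

theorem pow_mul_setIntegral_inter_closedBall_le (hφ : ContinuousOn φ (Icc M1 M2))
    (hφ0 : ∀ y ∈ Icc M1 M2, 0 ≤ φ y)
    (hloc : ∀ x ∈ Icc M1 M2, κ * ∫ y in Icc M1 M2 ∩ closedBall x (4 * r), φ y ≤ φ x)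
    (hκ : 0 ≤ κ) (hℓ : 0 ≤ ℓ) (hℓr : ℓ ≤ r) (hℓM : 2 * ℓ ≤ M2 - M1) (n : ℕ) {u v : ℝ}
    (hu : u ∈ Icc M1 M2) (hv : v ∈ Icc M1 M2) (huv : dist u v ≤ 2 * n * r) :
    (κ * ℓ) ^ n * ∫ y in Icc M1 M2 ∩ closedBall v r, φ y
      ≤ ∫ y in Icc M1 M2 ∩ closedBall u r, φ y := by
  rcases n.eq_zero_or_pos with rfl | hn
  · simp only [Nat.cast_zero, mul_zero, zero_mul, dist_le_zero] at huv
    simp [huv]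
  have hn' : (0 : ℝ) < n := by exact_mod_cast hn
  set p : ℕ → ℝ := fun k => v + (k / n : ℝ) * (u - v) with hp
  have hpI : ∀ k ≤ n, p k ∈ Icc M1 M2 := fun k hk =>
    (convex_Icc M1 M2).add_smul_sub_mem hv hu
      ⟨by positivity, div_le_one_of_le₀ (by exact_mod_cast hk) hn'.le⟩
  have hstep : ∀ k, dist (p (k + 1)) (p k) ≤ 2 * r := fun k => by
    rw [Real.dist_eq, show p (k + 1) - p k = (u - v) / n by simp only [hp]; push_cast; ring,
      abs_div, abs_of_pos hn', div_le_iff₀ hn', ← Real.dist_eq]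
    linarith
  have hchain : ∀ k ≤ n, (κ * ℓ) ^ k * ∫ y in Icc M1 M2 ∩ closedBall v r, φ y
      ≤ ∫ y in Icc M1 M2 ∩ closedBall (p k) r, φ y := by
    intro k
    induction k with
    | zero => intro; simp [hp]
    | succ k ih =>
      intro hk
      calc (κ * ℓ) ^ (k + 1) * ∫ y in Icc M1 M2 ∩ closedBall v r, φ y
          = κ * ℓ * ((κ * ℓ) ^ k * ∫ y in Icc M1 M2 ∩ closedBall v r, φ y) := by ring
        _ ≤ κ * ℓ * ∫ y in Icc M1 M2 ∩ closedBall (p k) r, φ y :=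
            mul_le_mul_of_nonneg_left (ih (by omega)) (by positivity)
        _ ≤ _ := mul_setIntegral_inter_closedBall_le_of_dist_le hφ hφ0 hloc hκ hℓ hℓr hℓM
            (hpI _ hk) (hstep k)
  simpa [hp, hn'.ne'] using hchain n le_rfl

theorem intervalIntegral_le_mul_of_forall_setIntegral_inter_closedBall_le
    (hφ : ContinuousOn φ (Icc M1 M2)) (hφ0 : ∀ y ∈ Icc M1 M2, 0 ≤ φ y) (h : M1 ≤ M2) {n : ℕ}
    (hn : 0 < n) (hnM : M2 - M1 ≤ 2 * n * r) {B : ℝ}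
    (hB : ∀ m ∈ Icc M1 M2, ∫ y in Icc M1 M2 ∩ closedBall m r, φ y ≤ B) :
    ∫ y in M1..M2, φ y ≤ n * B := by
  have hn' : (0 : ℝ) < n := by exact_mod_cast hn
  -- cut `[M1, M2]` into `n` pieces, each inside the window around its midpoint
  set s : ℕ → ℝ := fun i => M1 + i * ((M2 - M1) / n) with hs
  have hsI : ∀ i ≤ n, s i ∈ Icc M1 M2 := fun i hi => by
    have : (i : ℝ) * ((M2 - M1) / n) ≤ M2 - M1 := by
      rw [mul_div_assoc', div_le_iff₀ hn', mul_comm]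
      exact mul_le_mul_of_nonneg_left (by exact_mod_cast hi) (by linarith)
    exact ⟨by simp only [hs]; nlinarith [div_nonneg (sub_nonneg.2 h) hn'.le],
      by simp only [hs]; linarith⟩
  have hlen : ∀ i, s (i + 1) - s i = (M2 - M1) / n := fun i => by simp only [hs]; push_cast; ring
  have hpiece : ∀ i < n, ∫ y in s i..s (i + 1), φ y ≤ B := by
    intro i hi
    have hsub : Icc (s i) (s (i + 1)) ⊆ Icc M1 M2 ∩ closedBall ((s i + s (i + 1)) / 2) r := by
      intro y hy
      have hr : (M2 - M1) / n ≤ 2 * r := by rw [div_le_iff₀ hn']; linarith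
      refine ⟨⟨(hsI i hi.le).1.trans hy.1, hy.2.trans (hsI (i + 1) hi).2⟩, ?_⟩
      rw [mem_closedBall, Real.dist_eq, abs_le]
      constructor <;> linarith [hy.1, hy.2, hlen i]
    rw [intervalIntegral.integral_of_le (by linarith [hlen i, div_nonneg (sub_nonneg.2 h) hn'.le]),
      ← integral_Icc_eq_integral_Ioc]
    have hmid : (s i + s (i + 1)) / 2 ∈ Icc M1 M2 :=
      ⟨by linarith [(hsI i hi.le).1, (hsI (i + 1) hi).1],
        by linarith [(hsI i hi.le).2, (hsI (i + 1) hi).2]⟩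
    refine le_trans ?_ (hB _ hmid)
    exact setIntegral_mono_set (integrableOn_inter_closedBall hφ _ r)
      (ae_restrict_of_forall_mem (measurableSet_Icc.inter measurableSet_closedBall)
        fun y hy => hφ0 y hy.1) hsub.eventuallyLE
  have hsum := intervalIntegral.sum_integral_adjacent_intervals (f := φ) (μ := volume) (a := s)
    (n := n) fun k hk =>
      (hφ.mono (uIcc_subset_Icc (hsI k hk.le) (hsI (k + 1) hk))).intervalIntegrable
  have hs0 : s 0 = M1 := by simp [hs]
  have hsn : s n = M2 := by simp only [hs]; field_simp; ring
  rw [hs0, hsn] at hsum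
  calc ∫ y in M1..M2, φ y = ∑ i ∈ Finset.range n, ∫ y in s i..s (i + 1), φ y := hsum.symm
    _ ≤ ∑ _i ∈ Finset.range n, B := Finset.sum_le_sum fun i hi => hpiece i (Finset.mem_range.1 hi)
    _ = n * B := by simp

theorem harnack_of_local_bound (hφ : ContinuousOn φ (Icc M1 M2))
    (hφ0 : ∀ y ∈ Icc M1 M2, 0 ≤ φ y)
    (hloc : ∀ x ∈ Icc M1 M2, κ * ∫ y in Icc M1 M2 ∩ closedBall x (4 * r), φ y ≤ φ x)
    (hκ : 0 < κ) (hℓ : 0 < ℓ) (hℓr : ℓ ≤ r) (hℓM : 2 * ℓ ≤ M2 - M1) {n : ℕ} (hn : 0 < n)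
    (hnM : M2 - M1 ≤ 2 * n * r) {x : ℝ} (hx : x ∈ Icc M1 M2) :
    κ * (κ * ℓ) ^ n / n * ∫ y in M1..M2, φ y ≤ φ x := by
  have hq : 0 < (κ * ℓ) ^ n := by positivity
  have hcover := intervalIntegral_le_mul_of_forall_setIntegral_inter_closedBall_le hφ hφ0
    (by linarith) hn hnM (B := (∫ y in Icc M1 M2 ∩ closedBall x r, φ y) / (κ * ℓ) ^ n)
    fun m hm => by
      rw [le_div_iff₀ hq, mul_comm]
      exact pow_mul_setIntegral_inter_closedBall_le hφ hφ0 hloc hκ.le hℓ.le hℓr hℓM n hx hm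
        ((Real.dist_le_of_mem_Icc hx hm).trans hnM)
  calc κ * (κ * ℓ) ^ n / n * ∫ y in M1..M2, φ y
      ≤ κ * (κ * ℓ) ^ n / n * (n * ((∫ y in Icc M1 M2 ∩ closedBall x r, φ y) / (κ * ℓ) ^ n)) :=
        mul_le_mul_of_nonneg_left hcover (by positivity)
    _ = κ * ∫ y in Icc M1 M2 ∩ closedBall x r, φ y := by
        field_simp [(Nat.cast_pos.2 hn).ne']
    _ ≤ κ * ∫ y in Icc M1 M2 ∩ closedBall x (4 * r), φ y :=
        mul_le_mul_of_nonneg_left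
          (setIntegral_inter_closedBall_mono hφ hφ0 (by rw [dist_self]; linarith)) hκ.le
    _ ≤ φ x := hloc x hx

theorem IsTestFunction.harnack (hJ : KernelJ J) (hd : 0 < d) (ha : Continuous a)
    (hφ : IsTestFunction J M1 M2 d a lam φ) {D r η ℓ : ℝ} (hD0 : 0 < D)
    (hD : ∀ x ∈ Icc M1 M2, lam + d - a x ≤ D) (hη0 : 0 < η) (hη : ∀ u, |u| ≤ 4 * r → η ≤ J u)
    (hℓ : 0 < ℓ) (hℓr : ℓ ≤ r) (hℓM : 2 * ℓ ≤ M2 - M1) {n : ℕ} (hn : 0 < n)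
    (hnM : M2 - M1 ≤ 2 * n * r) {x : ℝ} (hx : x ∈ Icc M1 M2) :
    η * d / D * (η * d / D * ℓ) ^ n / n * ∫ y in M1..M2, φ y ≤ φ x := by
  have hM : M1 < M2 := by linarith
  have hφ0 : ∀ y ∈ Icc M1 M2, 0 ≤ φ y := fun y hy => (hφ.2.1 y hy).le
  refine harnack_of_local_bound hφ.1 hφ0 (fun y hy => ?_) (by positivity) hℓ hℓr hℓM hn hnM hx
  rw [div_mul_eq_mul_div, div_le_iff₀ hD0]
  calc η * d * ∫ z in Icc M1 M2 ∩ closedBall y (4 * r), φ z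
      = d * (η * ∫ z in Icc M1 M2 ∩ closedBall y (4 * r), φ z) := by ring
    _ ≤ d * ∫ z in M1..M2, J (y - z) * φ z := mul_le_mul_of_nonneg_left
        (mul_setIntegral_inter_closedBall_le_intervalIntegral hJ.1 hJ.2.1 hη hφ.1 hφ0 hM.le y) hd.le
    _ ≤ (lam + d - a y) * φ y := hφ.integral_le_of_mem_Icc hJ.1 ha hM hy
    _ ≤ φ y * D := by rw [mul_comm]; exact mul_le_mul_of_nonneg_left (hD y hy) (hφ0 y hy)

end Harnack

section Rescale

variable {J a φ : ℝ → ℝ} {d lam M1 M2 N1 N2 : ℝ}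

def rescale (N1 N2 M1 M2 x : ℝ) : ℝ := M1 + (x - N1) / (N2 - N1) * (M2 - M1)

theorem continuous_rescale : Continuous (rescale N1 N2 M1 M2) := by
  unfold rescale; fun_prop

theorem rescale_mem_Icc (hN : N1 < N2) (hM : M1 ≤ M2) {x : ℝ} (hx : x ∈ Icc N1 N2) :
    rescale N1 N2 M1 M2 x ∈ Icc M1 M2 := by
  have h0 : 0 ≤ (x - N1) / (N2 - N1) := div_nonneg (by linarith [hx.1]) (by linarith)
  have h1 : (x - N1) / (N2 - N1) ≤ 1 := div_le_one_of_le₀ (by linarith [hx.2]) (by linarith)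
  unfold rescale
  constructor <;> nlinarith

theorem rescale_mem_Ioo (hN : N1 < N2) (hM : M1 < M2) {x : ℝ} (hx : x ∈ Ioo N1 N2) :
    rescale N1 N2 M1 M2 x ∈ Ioo M1 M2 := by
  have h0 : 0 < (x - N1) / (N2 - N1) := div_pos (by linarith [hx.1]) (by linarith)
  have h1 : (x - N1) / (N2 - N1) < 1 := (div_lt_one (by linarith)).2 (by linarith [hx.2])
  unfold rescale
  constructor <;> nlinarith

theorem abs_sub_rescale_le (hN : N1 < N2) {x : ℝ} (hx : x ∈ Icc N1 N2) :
    |x - rescale N1 N2 M1 M2 x| ≤ max |M1 - N1| |M2 - N2| := by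
  set θ := (x - N1) / (N2 - N1)
  have h0 : 0 ≤ θ := div_nonneg (by linarith [hx.1]) (by linarith)
  have h1 : θ ≤ 1 := div_le_one_of_le₀ (by linarith [hx.2]) (by linarith)
  have hx' : x - rescale N1 N2 M1 M2 x = (1 - θ) * (N1 - M1) + θ * (N2 - M2) := by
    unfold rescale θ; field_simp [(sub_pos.2 hN).ne']; ring
  have e1 := abs_le.1 ((abs_sub_comm M1 N1).symm.trans_le (le_max_left |M1 - N1| |M2 - N2|))
  have e2 := abs_le.1 ((abs_sub_comm M2 N2).symm.trans_le (le_max_right |M1 - N1| |M2 - N2|))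
  rw [hx', abs_le]
  constructor <;> nlinarith

theorem integral_comp_rescale (hN : N1 < N2) (hM : M1 < M2) (x : ℝ) :
    ∫ y in N1..N2, J (x - y) * φ (rescale N1 N2 M1 M2 y)
      = (N2 - N1) / (M2 - M1) *
          ∫ z in M1..M2, J ((N2 - N1) / (M2 - M1) * (rescale N1 N2 M1 M2 x - z)) * φ z := by
  have hN' := (sub_pos.2 hN).ne'
  have hM' := (sub_pos.2 hM).ne'
  set s := (M2 - M1) / (N2 - N1)
  have hs : s ≠ 0 := div_ne_zero (by linarith) (by linarith)
  have hrs : ∀ y, rescale N1 N2 M1 M2 y = s * y + (M1 - s * N1) := fun y => by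
    unfold rescale s; ring
  have hdiff : ∀ y,
      x - y = (N2 - N1) / (M2 - M1) * (rescale N1 N2 M1 M2 x - rescale N1 N2 M1 M2 y) :=
    fun y => by unfold rescale; field_simp; ring
  simp_rw [hdiff, hrs]
  rw [intervalIntegral.integral_comp_mul_add
    (fun z => J ((N2 - N1) / (M2 - M1) * (s * x + (M1 - s * N1) - z)) * φ z) hs, smul_eq_mul]
  congr 1
  · unfold s; rw [inv_div]
  · congr 1 <;> (unfold s; field_simp; ring)

theorem exists_pos_forall_comp_mul_le_add (hJ : Continuous J) (R : ℝ) {ω : ℝ} (hω : 0 < ω) :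
    ∃ δ > 0, ∀ t u, |u| ≤ R → |t * u| ≤ R → |t - 1| * R < δ → J (t * u) ≤ J u + ω := by
  obtain ⟨δ, hδ, hJδ⟩ := uniformContinuousOn_iff.1
    ((isCompact_Icc (a := -R) (b := R)).uniformContinuousOn_of_continuous hJ.continuousOn) ω hω
  refine ⟨δ, hδ, fun t u hu htu htδ => ?_⟩
  have hdist : dist (t * u) u < δ := by
    rw [Real.dist_eq, show t * u - u = (t - 1) * u by ring, abs_mul]
    exact (mul_le_mul_of_nonneg_left hu (abs_nonneg _)).trans_lt htδ
  have := hJδ _ (abs_le.1 htu) _ (abs_le.1 hu) hdist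
  rw [Real.dist_eq] at this
  linarith [le_abs_self (J (t * u) - J u)]

theorem intervalIntegral_kernel_comp_mul_le (hJ : Continuous J) (hφ : ContinuousOn φ (Icc M1 M2))
    (hφ0 : ∀ y ∈ Icc M1 M2, 0 ≤ φ y) (h : M1 ≤ M2) {t ω x : ℝ} (hx : x ∈ Icc M1 M2)
    (hω : ∀ u, |u| ≤ M2 - M1 → J (t * u) ≤ J u + ω) :
    ∫ z in M1..M2, J (t * (x - z)) * φ z
      ≤ (∫ z in M1..M2, J (x - z) * φ z) + ω * ∫ z in M1..M2, φ z := by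
  have hint : ∀ s : ℝ, IntervalIntegrable (fun z => J (s * (x - z)) * φ z) volume M1 M2 :=
    fun s => ((hJ.comp (by fun_prop)).continuousOn.mul hφ).intervalIntegrable_of_Icc h
  have hint1 : IntervalIntegrable (fun z => J (x - z) * φ z) volume M1 M2 := by
    simpa using hint 1
  have hintω := (hφ.intervalIntegrable_of_Icc (μ := volume) h).const_mul ω
  rw [← intervalIntegral.integral_const_mul, ← intervalIntegral.integral_add hint1 hintω]
  refine intervalIntegral.integral_mono_on h (hint t) (hint1.add hintω) fun z hz => ?_
  have hxz : |x - z| ≤ M2 - M1 := by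
    rw [← Real.dist_eq]; exact Real.dist_le_of_mem_Icc hx hz
  nlinarith [hω _ hxz, hφ0 z hz]

theorem IsTestFunction.comp_rescale (hJ : KernelJ J) (hd : 0 ≤ d) {K : NNReal}
    (ha : LipschitzWith K a) (hM : M1 < M2) (hN : N1 < N2) (hφ : IsTestFunction J M1 M2 d a lam φ)
    {c D ω : ℝ} (hc : 0 < c) (hHar : ∀ x ∈ Ioo M1 M2, c * ∫ y in M1..M2, φ y ≤ φ x)
    (hD : ∀ x ∈ Ioo M1 M2, lam + d - a x ≤ D) (hω0 : 0 ≤ ω)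
    (hω : ∀ u, |u| ≤ M2 - M1 → J ((N2 - N1) / (M2 - M1) * u) ≤ J u + ω) :
    IsTestFunction J N1 N2 d a
      (lam + K * max |M1 - N1| |M2 - N2| + |(N2 - N1) / (M2 - M1) - 1| * D
        + (N2 - N1) / (M2 - M1) * d * ω / c)
      (φ ∘ rescale N1 N2 M1 M2) := by
  refine ⟨hφ.1.comp continuous_rescale.continuousOn fun x hx => rescale_mem_Icc hN hM.le hx,
    fun x hx => hφ.2.1 _ (rescale_mem_Icc hN hM.le hx), fun x hx => ?_⟩
  set t := (N2 - N1) / (M2 - M1)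
  set x' := rescale N1 N2 M1 M2 x
  have hx' : x' ∈ Ioo M1 M2 := rescale_mem_Ioo hN hM hx
  have hφx' : 0 < φ x' := hφ.2.1 x' (Ioo_subset_Icc_self hx')
  have ht : 0 ≤ t := div_nonneg (by linarith) (by linarith)
  have hdil := intervalIntegral_kernel_comp_mul_le hJ.1 hφ.1 (fun y hy => (hφ.2.1 y hy).le)
    hM.le (Ioo_subset_Icc_self hx') hω
  have hbase := hφ.integral_le hx'
  have hA : (t - 1) * (lam + d - a x') * φ x' ≤ |t - 1| * D * φ x' := by
    refine mul_le_mul_of_nonneg_right ?_ hφx'.le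
    exact (mul_le_mul_of_nonneg_right (le_abs_self _) (hφ.coeff_nonneg hJ.2.1 hd hx')).trans
      (mul_le_mul_of_nonneg_left (hD x' hx') (abs_nonneg _))
  have hLip : (a x - a x') * φ x' ≤ K * max |M1 - N1| |M2 - N2| * φ x' := by
    refine mul_le_mul_of_nonneg_right ?_ hφx'.le
    calc a x - a x' ≤ dist (a x) (a x') := (le_abs_self _).trans (Real.dist_eq _ _).ge
      _ ≤ K * dist x x' := ha.dist_le_mul x x'
      _ ≤ K * max |M1 - N1| |M2 - N2| := mul_le_mul_of_nonneg_left
          ((Real.dist_eq _ _).trans_le (abs_sub_rescale_le hN (Ioo_subset_Icc_self hx))) K.2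
  have hmass : t * d * ω * ∫ z in M1..M2, φ z ≤ t * d * ω / c * φ x' := by
    have := mul_le_mul_of_nonneg_left (hHar x' hx') (by positivity : 0 ≤ t * d * ω / c)
    rwa [← mul_assoc, div_mul_cancel₀ _ hc.ne'] at this
  simp only [Function.comp_apply, integral_comp_rescale hN hM]
  linarith [mul_le_mul_of_nonneg_left hdil (mul_nonneg hd ht), mul_le_mul_of_nonneg_left hbase ht]

theorem lambdaP_le_lambdaP_add (hJ : KernelJ J) (hd : 0 < d) {K : NNReal}
    (ha : LipschitzWith K a) (hM : M1 < M2) (hN : N1 < N2) {c D ω : ℝ} (hc : 0 < c)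
    (hHar : ∀ lam φ, IsTestFunction J M1 M2 d a lam φ → lam ≤ lambdaP J M1 M2 d a + 1 →
      (∀ x ∈ Icc M1 M2, lam + d - a x ≤ D) ∧ ∀ x ∈ Icc M1 M2, c * ∫ y in M1..M2, φ y ≤ φ x)
    (hω0 : 0 ≤ ω) (hω : ∀ u, |u| ≤ M2 - M1 → J ((N2 - N1) / (M2 - M1) * u) ≤ J u + ω) :
    lambdaP J N1 N2 d a ≤ lambdaP J M1 M2 d a + K * max |M1 - N1| |M2 - N2|
      + |(N2 - N1) / (M2 - M1) - 1| * D + (N2 - N1) / (M2 - M1) * d * ω / c := by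
  refine le_of_forall_pos_lt_add fun ε hε => ?_
  obtain ⟨lam, φ, hφ, hlam⟩ := exists_isTestFunction_lt hJ hd.le ha.continuous
    (L1 := M1) (L2 := M2) (lt_min hε one_pos)
  obtain ⟨hD, hφHar⟩ := hHar lam φ hφ (hlam.le.trans (by gcongr; exact min_le_right _ _))
  have := lambdaP_le hJ.2.1 hd.le hN (hφ.comp_rescale hJ hd.le ha hM hN hc
    (fun x hx => hφHar x (Ioo_subset_Icc_self hx)) (fun x hx => hD x (Ioo_subset_Icc_self hx))
    hω0 hω)
  linarith [min_le_left ε 1]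

end Rescale

section Continuity

variable {J a : ℝ → ℝ} {d : ℝ}

theorem continuousAt_of_forall_eventually_le_add {X : Type*} [TopologicalSpace X] {f : X → ℝ}
    {x : X} (h : ∀ ε > 0, ∀ᶠ p in 𝓝 (x, x), f p.2 ≤ f p.1 + ε) : ContinuousAt f x := by
  rw [ContinuousAt, Metric.tendsto_nhds]
  intro ε hε
  have h' := (nhds_prod_eq (x := x) (y := x) ▸ h (ε / 2) (half_pos hε)).curry
  filter_upwards [h'.self_of_nhds, h'.mono fun y hy => hy.self_of_nhds] with y h1 h2
  rw [Real.dist_eq, abs_lt]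
  constructor <;> linarith

theorem KernelJ.exists_half_le (hJ : KernelJ J) : ∃ r > 0, ∀ u, |u| ≤ r → J 0 / 2 ≤ J u := by
  obtain ⟨δ, hδ, h⟩ := Metric.eventually_nhds_iff.1
    (hJ.1.continuousAt.eventually (lt_mem_nhds (half_lt_self hJ.2.2.2.2.1)))
  refine ⟨δ / 2, by positivity, fun u hu => (h ?_).le⟩
  rw [Real.dist_eq, sub_zero]
  linarith

theorem exists_harnack_const_nhds (hJ : KernelJ J) (hd : 0 < d) (ha : Continuous a)
    (L : ℝ × ℝ) (hL : L.1 < L.2) :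
    ∃ D c : ℝ, 0 < c ∧ ∀ᶠ M in 𝓝 L, M.1 < M.2 ∧ M.2 - M.1 < 2 * (L.2 - L.1) ∧
      ∀ lam φ, IsTestFunction J M.1 M.2 d a lam φ → lam ≤ lambdaP J M.1 M.2 d a + 1 →
        (∀ x ∈ Icc M.1 M.2, lam + d - a x ≤ D) ∧
          ∀ x ∈ Icc M.1 M.2, c * ∫ y in M.1..M.2, φ y ≤ φ x := by
  obtain ⟨L1, L2⟩ := L
  dsimp only at hL ⊢
  obtain ⟨C, hC⟩ := (isCompact_Icc (a := L1 - 1) (b := L2 + 1)).exists_bound_of_continuousOn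
    ha.continuousOn
  simp only [Real.norm_eq_abs] at hC
  have hC0 : 0 ≤ C := (abs_nonneg _).trans (hC L1 ⟨by linarith, by linarith⟩)
  obtain ⟨r, hr, hη⟩ : ∃ r > 0, ∀ u, |u| ≤ 4 * r → J 0 / 2 ≤ J u :=
    let ⟨ρ, hρ, h⟩ := hJ.exists_half_le
    ⟨ρ / 4, by positivity, fun u hu => h u (by linarith)⟩
  have hη0 : 0 < J 0 / 2 := half_pos hJ.2.2.2.2.1
  obtain ⟨n, hn⟩ := exists_nat_gt ((L2 - L1) / r)
  have hn0 : 0 < n := by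
    have : (0 : ℝ) < n := (div_pos (by linarith) hr).trans hn
    exact_mod_cast this
  rw [div_lt_iff₀ hr] at hn
  set D := 2 * C + d + 1
  set ℓ := min r ((L2 - L1) / 4)
  have hℓ : 0 < ℓ := lt_min hr (by linarith)
  set κ := J 0 / 2 * d / D
  refine ⟨D, κ * (κ * ℓ) ^ n / n, by positivity, ?_⟩
  have hρ : 0 < min 1 ((L2 - L1) / 4) := lt_min one_pos (by linarith)
  filter_upwards [ball_mem_nhds (L1, L2) hρ] with ⟨M1, M2⟩ hM
  simp only [mem_ball, Prod.dist_eq, Real.dist_eq, max_lt_iff, lt_min_iff, abs_sub_lt_iff] at hM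
  have hM : M1 < M2 := by linarith
  refine ⟨hM, by linarith, fun lam φ hφ hlam => ?_⟩
  have hsub : Icc M1 M2 ⊆ Icc (L1 - 1) (L2 + 1) := Icc_subset_Icc (by linarith) (by linarith)
  have hlamC : lambdaP J M1 M2 d a ≤ C :=
    lambdaP_le_of_forall_le hJ hd.le hM fun x hx => (le_abs_self _).trans (hC x (hsub hx))
  have hD : ∀ x ∈ Icc M1 M2, lam + d - a x ≤ D := fun x hx => by
    linarith [neg_abs_le (a x), hC x (hsub hx)]
  refine ⟨hD, fun x hx => hφ.harnack hJ hd ha (by positivity) hD hη0 hη hℓ (min_le_left _ _)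
    ?_ hn0 ?_ hx⟩
  · linarith [min_le_right r ((L2 - L1) / 4)]
  · linarith

theorem eventually_lambdaP_le_add (hJ : KernelJ J) (hd : 0 < d) {K : NNReal}
    (ha : LipschitzWith K a) (L : ℝ × ℝ) (hL : L.1 < L.2) {ε : ℝ} (hε : 0 < ε) :
    ∀ᶠ p in 𝓝 (L, L), lambdaP J p.2.1 p.2.2 d a ≤ lambdaP J p.1.1 p.1.2 d a + ε := by
  obtain ⟨D, c, hc, hHar⟩ := exists_harnack_const_nhds hJ hd ha.continuous L hL
  set R := 4 * (L.2 - L.1)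
  set ω := ε * c / (4 * d)
  obtain ⟨δ, hδ, hJδ⟩ := exists_pos_forall_comp_mul_le_add hJ.1 R (ω := ω) (by positivity)
  set t : (ℝ × ℝ) × (ℝ × ℝ) → ℝ := fun p => (p.2.2 - p.2.1) / (p.1.2 - p.1.1)
  have hL' : L.2 - L.1 ≠ 0 := (sub_pos.2 hL).ne'
  have ht : ContinuousAt t (L, L) := by fun_prop (disch := exact hL')
  have hsmall : ContinuousAt (fun p => K * dist p.1 p.2 + |t p - 1| * D) (L, L) := by
    fun_prop (disch := exact hL')
  have ht1 : t (L, L) = 1 := div_self hL'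
  filter_upwards [(continuous_fst.tendsto (L, L)).eventually hHar,
    (continuous_snd.tendsto (L, L)).eventually
      ((isOpen_lt continuous_fst continuous_snd).mem_nhds hL),
    ht.eventually (gt_mem_nhds (show t (L, L) < 2 by rw [ht1]; norm_num)),
    (ht.sub continuousAt_const).abs.mul continuousAt_const |>.eventually
      (gt_mem_nhds (show |t (L, L) - 1| * R < δ by rw [ht1]; simpa using hδ)),
    hsmall.eventually (gt_mem_nhds (show K * dist (L, L).1 (L, L).2 + |t (L, L) - 1| * D < ε / 4
      by rw [ht1]; simpa using hε))]
    with ⟨⟨M1, M2⟩, ⟨N1, N2⟩⟩ ⟨hM, hMlen, hHarM⟩ hN ht2 htδ hsmall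
  dsimp only [t] at ht2 htδ hsmall
  have ht0 : 0 ≤ (N2 - N1) / (M2 - M1) := div_nonneg (by linarith) (by linarith)
  have key := lambdaP_le_lambdaP_add hJ hd ha hM hN hc hHarM (by positivity) fun u hu =>
    hJδ _ u (by linarith) (by rw [abs_mul, abs_of_nonneg ht0]; nlinarith [abs_nonneg u]) htδ
  have hω : (N2 - N1) / (M2 - M1) * d * ω / c = (N2 - N1) / (M2 - M1) * (ε / 4) := by
    simp only [ω]; field_simp
  simp only [Prod.dist_eq, Real.dist_eq] at hsmall
  linarith [mul_lt_mul_of_pos_right ht2 (by positivity : 0 < ε / 4)]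

end Continuity

theorem lambdaP_continuous_in_interval_general
    (J : ℝ → ℝ) (d : ℝ) (a : ℝ → ℝ)
    (hJ : KernelJ J) (hd : 0 < d)
    (haL : ∃ K, LipschitzWith K a) :
    ContinuousOn (fun p : ℝ × ℝ => lambdaP J p.1 p.2 d a) {p : ℝ × ℝ | p.1 < p.2} := by
  obtain ⟨K, ha⟩ := haL
  refine (isOpen_lt continuous_fst continuous_snd).continuousOn_iff.2 fun L hL =>
    continuousAt_of_forall_eventually_le_add fun ε hε => ?_
  exact eventually_lambdaP_le_add hJ hd ha L hL hε

/-- Theorem 3.3 (i): for fixed `d > 0`, the map `(L1, L2) ↦ λ_p((L1,L2), d, a)` is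
continuous on `{(L1, L2) : L1 < L2}`. -/
theorem lambdaP_continuous_in_interval
    (J : ℝ → ℝ) (d : ℝ) (a : ℝ → ℝ)
    (hJ : KernelJ J) (hd : 0 < d)
    (haL : ∃ K, LipschitzWith K a)
    (haH : ∀ L1 L2 : ℝ, L1 < L2 → ∃ x0 ∈ Ioo L1 L2, ∀ x ∈ Icc L1 L2, a x ≤ a x0) :
    ContinuousOn (fun p : ℝ × ℝ => lambdaP J p.1 p.2 d a) {p : ℝ × ℝ | p.1 < p.2} :=
  lambdaP_continuous_in_interval_general J d a hJ hd haL
end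
end
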